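/- Let n ≥ 6 with gcd(n, n−3) = 1. For j = 2, 3, 4, let 𝒬_j be a primitive nonpowerful signed digraph whose underlying digraph is 𝓑_j and in which all cycles of length n−3 have the same sign. Then l_{𝒬_j}(k) = l_{𝒬_j}(v_k) = 2n²−8n+3+k for every 1 ≤ k ≤ n and every j ∈ {2,3,4}. -/

import Mathlib

/-!
Switching along the Hamilton cycle `Cₙ` makes every arc positive except the arc `v₁ → vₙ`, of
sign `ρ`, and the chords `vⱼ → v_{n-4+j}`, which all get one sign `σ` because all
`(n-3)`-cycles have the same sign. A walk of length `t` from `u` to `v` that uses `w` times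
the arc `v₁ → vₙ` and `c` chords then satisfies `t + v = u + n w + (n-3) c`, and its sign is
`ρ^w σ^c` up to a factor depending only on `u` and `v`. As `gcd(n, n-3) = 1`, two such types
`(w, c)` of the same length differ by a multiple of `(n-3, -n)`; so nonpowerfulness forces
`ρ^(n-3) σ^n = -1`, and there are SSSD walks of length `t` from `u` to `v` exactly when
`t + v - u - n(n-3)` is a combination of `n` and `n-3` (every type with `w ≥ 1` or `c ≥ 2`
is realised by a walk). The Frobenius number `n(n-3) - n - (n-3)` of `n` and `n-3` then
gives the local base `2n² - 8n + 4 + u` at the vertex with 0-based index `u`, the walks of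
one step less to `v₁` witnessing minimality.
-/

/-- `f : ℕ → V` traces a directed walk of length `t` in the digraph with
adjacency relation `A` if consecutive vertices are joined by arcs. -/
def IsWalk {V : Type*} (A : V → V → Prop) (t : ℕ) (f : ℕ → V) : Prop :=
  ∀ i < t, A (f i) (f (i + 1))

/-- There is a directed walk of length `t` from `u` to `v`. -/
def HasWalk {V : Type*} (A : V → V → Prop) (t : ℕ) (u v : V) : Prop :=
  ∃ f : ℕ → V, f 0 = u ∧ f t = v ∧ IsWalk A t f

/-- A digraph is strongly connected if every vertex can reach every vertex. -/
def StronglyConnected {V : Type*} (A : V → V → Prop) : Prop :=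
  ∀ u v : V, ∃ t : ℕ, HasWalk A t u v

/-- A digraph is primitive if it is strongly connected and for some `t > 0`
there are directed walks of length `t` between every ordered pair of vertices. -/
def IsPrimitive {V : Type*} (A : V → V → Prop) : Prop :=
  StronglyConnected A ∧ ∃ t : ℕ, 0 < t ∧ ∀ u v : V, HasWalk A t u v

/-- The local exponent at `u`: the least `l` such that for every `t ≥ l` and
every vertex `v` there is a directed walk of length `t` from `u` to `v`. -/
noncomputable def localExp {V : Type*} (A : V → V → Prop) (u : V) : ℕ :=
  sInf {l : ℕ | ∀ t ≥ l, ∀ v : V, HasWalk A t u v}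

/-- `kthSmallest f k` is the `k`-th smallest element (1-indexed) of the
multiset of values of `f`. -/
noncomputable def kthSmallest {n : ℕ} (f : Fin n → ℕ) (k : ℕ) : ℕ :=
  (Multiset.sort (Finset.univ.val.map f) (· ≤ ·)).getD (k - 1) 0

/-- A directed cycle of length `c` (a closed walk whose first `c` vertices are
pairwise distinct), given by its vertex function. -/
def IsCycle {V : Type*} (A : V → V → Prop) (c : ℕ) (f : ℕ → V) : Prop :=
  IsWalk A c f ∧ f c = f 0 ∧ ∀ i < c, ∀ j < c, f i = f j → i = j

/-- A signed digraph: each arc carries a sign `+1` or `-1`. -/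
structure SignedDigraph (V : Type*) where
  Adj : V → V → Prop
  sgn : V → V → ℤ
  sgn_unit : ∀ u v : V, Adj u v → sgn u v = 1 ∨ sgn u v = -1

namespace SignedDigraph

variable {V : Type*} (S : SignedDigraph V)

/-- The sign of the walk of length `t` traced by `f`. -/
def walkSign (t : ℕ) (f : ℕ → V) : ℤ :=
  ∏ i ∈ Finset.range t, S.sgn (f i) (f (i + 1))

/-- There is a pair of SSSD walks of length `t` from `u` to `v`: two walks with
the same endpoints and the same length but different signs. -/
def HasSSSD (t : ℕ) (u v : V) : Prop :=
  ∃ f g : ℕ → V,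
    (f 0 = u ∧ f t = v ∧ IsWalk S.Adj t f) ∧
    (g 0 = u ∧ g t = v ∧ IsWalk S.Adj t g) ∧
    S.walkSign t f ≠ S.walkSign t g

/-- A signed digraph is primitive and nonpowerful if from some length on there
are SSSD walk pairs between all ordered pairs of vertices. -/
def IsPrimitiveNonpowerful : Prop :=
  ∃ l : ℕ, 0 < l ∧ ∀ t ≥ l, ∀ u v : V, S.HasSSSD t u v

/-- The local base at vertex `u`: the least `l` such that for every `t ≥ l` and
every vertex `v` there is a pair of SSSD walks of length `t` from `u` to `v`. -/
noncomputable def localBase (u : V) : ℕ :=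
  sInf {l : ℕ | ∀ t ≥ l, ∀ v : V, S.HasSSSD t u v}

/-- All directed cycles of length `c` in `S` have the same sign. -/
def SameSignCycles (c : ℕ) : Prop :=
  ∀ f g : ℕ → V, IsCycle S.Adj c f → IsCycle S.Adj c g →
    S.walkSign c f = S.walkSign c g

end SignedDigraph

/-- Isomorphism of digraphs. -/
def DigraphIso {V W : Type*} (A : V → V → Prop) (B : W → W → Prop) : Prop :=
  ∃ e : V ≃ W, ∀ u v : V, A u v ↔ B (e u) (e v)

/-- The Hamilton cycle `Cₙ` on `v₁,…,vₙ` (here `vⱼ` is the vertex with 0-based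
index `j-1`), with arcs `v₁ → vₙ` and `vⱼ → v_{j-1}` for `2 ≤ j ≤ n`. -/
def CnAdj (n : ℕ) : Fin n → Fin n → Prop := fun a b =>
  (a.val = 0 ∧ b.val = n - 1) ∨ a.val = b.val + 1

/-- The digraph `D_{k,i}`: the Hamilton cycle `Cₙ` together with the arcs
`vⱼ → v_{n-k+j-1}` for `1 ≤ j ≤ i`. -/
def DkiAdj (n k i : ℕ) : Fin n → Fin n → Prop := fun a b =>
  CnAdj n a b ∨ ∃ j : ℕ, 1 ≤ j ∧ j ≤ i ∧ a.val = j - 1 ∧ b.val = n - k + j - 2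

/-- The digraph `𝓛`: `Cₙ` together with the arcs `v₁ → v_{n-2}` and `v₃ → vₙ`. -/
def LAdj (n : ℕ) : Fin n → Fin n → Prop := fun a b =>
  CnAdj n a b ∨ (a.val = 0 ∧ b.val = n - 3) ∨ (a.val = 2 ∧ b.val = n - 1)

/-- The digraph `F`: the `(n-1)`-cycle `v₁ → vₙ → v_{n-1} → v_{n-3} → ⋯ → v₂ → v₁`
together with the arcs `v₁ → v_{n-2}` and `v_{n-2} → v_{n-3}`. -/
def FAdj (n : ℕ) : Fin n → Fin n → Prop := fun a b =>
  (a.val = 0 ∧ b.val = n - 1) ∨ (a.val = n - 1 ∧ b.val = n - 2) ∨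
  (a.val = n - 2 ∧ b.val = n - 4) ∨ (a.val = b.val + 1 ∧ 1 ≤ a.val ∧ a.val ≤ n - 4) ∨
  (a.val = 0 ∧ b.val = n - 3) ∨ (a.val = n - 3 ∧ b.val = n - 4)

/-- The digraph `F₁`: the `(n-1)`-cycle `v₁ → v_{n-1} → v_{n-2} → ⋯ → v₂ → v₁`
together with the arcs `v₁ → v_{n-2}`, `v₂ → vₙ` and `vₙ → v_{n-1}`. -/
def F1Adj (n : ℕ) : Fin n → Fin n → Prop := fun a b =>
  (a.val = 0 ∧ b.val = n - 2) ∨ (a.val = b.val + 1 ∧ 1 ≤ a.val ∧ a.val ≤ n - 2) ∨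
  (a.val = 0 ∧ b.val = n - 3) ∨ (a.val = 1 ∧ b.val = n - 1) ∨ (a.val = n - 1 ∧ b.val = n - 2)

/-- The digraph `F₂`: the `(n-1)`-cycle `v₁ → vₙ → v_{n-2} → v_{n-3} → ⋯ → v₂ → v₁`
together with the arcs `v₁ → v_{n-2}`, `vₙ → v_{n-1}` and `v_{n-1} → v_{n-3}`. -/
def F2Adj (n : ℕ) : Fin n → Fin n → Prop := fun a b =>
  (a.val = 0 ∧ b.val = n - 1) ∨ (a.val = n - 1 ∧ b.val = n - 3) ∨
  (a.val = b.val + 1 ∧ 1 ≤ a.val ∧ a.val ≤ n - 3) ∨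
  (a.val = 0 ∧ b.val = n - 3) ∨ (a.val = n - 1 ∧ b.val = n - 2) ∨ (a.val = n - 2 ∧ b.val = n - 4)

/-- The digraph `F₃`: the `(n-2)`-cycle `v₁ → v_{n-2} → v_{n-3} → ⋯ → v₂ → v₁`
together with the arcs `v₁ → v_{n-1}`, `v_{n-1} → v_{n-2}`, `v₁ → vₙ` and `vₙ → v_{n-2}`. -/
def F3Adj (n : ℕ) : Fin n → Fin n → Prop := fun a b =>
  (a.val = 0 ∧ b.val = n - 3) ∨ (a.val = b.val + 1 ∧ 1 ≤ a.val ∧ a.val ≤ n - 3) ∨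
  (a.val = 0 ∧ b.val = n - 2) ∨ (a.val = n - 2 ∧ b.val = n - 3) ∨
  (a.val = 0 ∧ b.val = n - 1) ∨ (a.val = n - 1 ∧ b.val = n - 3)

/-- The digraph `F₇`: the `(n-1)`-cycle `v₁ → v_{n-1} → v_{n-2} → ⋯ → v₂ → v₁`
together with the arcs `v₁ → v_{n-2}`, `v₃ → vₙ` and `vₙ → v_{n-1}`. -/
def F7Adj (n : ℕ) : Fin n → Fin n → Prop := fun a b =>
  (a.val = 0 ∧ b.val = n - 2) ∨ (a.val = b.val + 1 ∧ 1 ≤ a.val ∧ a.val ≤ n - 2) ∨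
  (a.val = 0 ∧ b.val = n - 3) ∨ (a.val = 2 ∧ b.val = n - 1) ∨ (a.val = n - 1 ∧ b.val = n - 2)

/-- The digraph `F'ᵢ` (for `2 ≤ i ≤ n-3`): the `(n-1)`-cycle
`v₁ → v_{n-1} → v_{n-2} → ⋯ → v₂ → v₁` together with the arcs `v₁ → v_{n-2}`,
`v_{i+1} → vₙ` and `vₙ → v_{i-1}`. -/
def FpAdj (n i : ℕ) : Fin n → Fin n → Prop := fun a b =>
  (a.val = 0 ∧ b.val = n - 2) ∨ (a.val = b.val + 1 ∧ 1 ≤ a.val ∧ a.val ≤ n - 2) ∨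
  (a.val = 0 ∧ b.val = n - 3) ∨ (a.val = i ∧ b.val = n - 1) ∨ (a.val = n - 1 ∧ b.val = i - 2)

/-- The digraph `𝓑₁`: `Cₙ` together with the arcs `v₁ → v_{n-3}` and `v₃ → v_{n-1}`. -/
def B1Adj (n : ℕ) : Fin n → Fin n → Prop := fun a b =>
  CnAdj n a b ∨ (a.val = 0 ∧ b.val = n - 4) ∨ (a.val = 2 ∧ b.val = n - 2)

/-- The digraph `𝓑₂`: `Cₙ` together with the arcs `v₁ → v_{n-3}` and `v₄ → vₙ`. -/
def B2Adj (n : ℕ) : Fin n → Fin n → Prop := fun a b =>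
  CnAdj n a b ∨ (a.val = 0 ∧ b.val = n - 4) ∨ (a.val = 3 ∧ b.val = n - 1)

/-- The digraph `𝓑₃`: `Cₙ` together with the arcs `v₁ → v_{n-3}`, `v₂ → v_{n-2}`
and `v₄ → vₙ`. -/
def B3Adj (n : ℕ) : Fin n → Fin n → Prop := fun a b =>
  CnAdj n a b ∨ (a.val = 0 ∧ b.val = n - 4) ∨ (a.val = 1 ∧ b.val = n - 3) ∨
  (a.val = 3 ∧ b.val = n - 1)

/-- The digraph `𝓑₄`: `Cₙ` together with the arcs `v₁ → v_{n-3}`, `v₃ → v_{n-1}`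
and `v₄ → vₙ`. -/
def B4Adj (n : ℕ) : Fin n → Fin n → Prop := fun a b =>
  CnAdj n a b ∨ (a.val = 0 ∧ b.val = n - 4) ∨ (a.val = 2 ∧ b.val = n - 2) ∨
  (a.val = 3 ∧ b.val = n - 1)

open Finset

theorem kthSmallest_of_monotone {n : ℕ} {f : Fin n → ℕ} (hf : Monotone f) (i : Fin n) :
    kthSmallest f (i.val + 1) = f i := by
  have hsorted : (List.ofFn f).Pairwise (· ≤ ·) :=
    List.pairwise_ofFn.mpr fun _ _ hij => hf hij.le
  rw [kthSmallest, Fin.univ_val_map, Multiset.coe_sort, List.mergeSort_eq_self _ hsorted,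
    Nat.add_sub_cancel, List.getD_eq_getElem?_getD, List.getElem?_ofFn]
  simp

lemma Nat.Coprime.exists_eq_add_mul_of_mul_add_mul_eq {a b x y x' y' : ℕ} (hab : a.Coprime b)
    (ha : 0 < a) (h : a * x + b * y = a * x' + b * y') (hy : y ≤ y') :
    ∃ k, y' = y + a * k ∧ x = x' + b * k := by
  obtain ⟨d, rfl⟩ := Nat.exists_eq_add_of_le hy
  have hax : a * x = a * x' + b * d := by rw [mul_add] at h; omega
  obtain ⟨k, rfl⟩ : a ∣ d :=
    hab.dvd_of_dvd_mul_left ⟨x - x', by rw [Nat.mul_sub]; omega⟩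
  exact ⟨k, rfl, Nat.eq_of_mul_eq_mul_left ha (by rw [hax]; ring)⟩

lemma Nat.Coprime.eq_of_mul_add_mul_eq {a b x y x' y' : ℕ} (hab : a.Coprime b) (ha : 0 < a)
    (h : a * x + b * y = a * x' + b * y') (hN : ∀ p q, a * p + b * q + a * b ≠ a * x + b * y) :
    x = x' ∧ y = y' := by
  wlog hy : y ≤ y' generalizing x y x' y'
  · obtain ⟨h₁, h₂⟩ := this h.symm (h ▸ hN) (by omega)
    exact ⟨h₁.symm, h₂.symm⟩
  obtain ⟨_ | k, rfl, rfl⟩ := hab.exists_eq_add_mul_of_mul_add_mul_eq ha h hy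
  · simp
  · exact absurd (by ring) (hN (x' + b * k) y)

lemma Int.pow_two_mul_add_of_isUnit {x : ℤ} (hx : IsUnit x) (k m : ℕ) :
    x ^ (2 * k + m) = x ^ m := by
  rw [pow_add, pow_mul, Int.isUnit_sq hx, one_pow, one_mul]

section Walks

variable {V : Type*} {A : V → V → Prop}

lemma IsWalk.of_le {t s : ℕ} {f : ℕ → V} (h : IsWalk A t f) (hst : s ≤ t) : IsWalk A s f :=
  fun i hi => h i (by omega)

def appendWalk (f : ℕ → V) (t : ℕ) (g : ℕ → V) (i : ℕ) : V :=
  if i ≤ t then f i else g (i - t)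

variable {f g : ℕ → V} {t₁ t₂ : ℕ}

lemma appendWalk_add (hfg : f t₁ = g 0) (i : ℕ) : appendWalk f t₁ g (t₁ + i) = g i := by
  rcases Nat.eq_zero_or_pos i with rfl | hi
  · simp [appendWalk, hfg]
  · simp [appendWalk, show ¬ t₁ + i ≤ t₁ by omega]

lemma IsWalk.append (hf : IsWalk A t₁ f) (hg : IsWalk A t₂ g) (hfg : f t₁ = g 0) :
    IsWalk A (t₁ + t₂) (appendWalk f t₁ g) := by
  intro i hi
  rcases lt_or_ge i t₁ with h | h
  · simpa [appendWalk, h.le, Nat.succ_le_of_lt h] using hf i h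
  · obtain ⟨j, rfl⟩ := Nat.exists_eq_add_of_le h
    rw [add_assoc, appendWalk_add hfg, appendWalk_add hfg]
    exact hg j (by omega)

lemma sum_appendWalk {M : Type*} [AddCommMonoid M] (h : V → V → M) (hfg : f t₁ = g 0) :
    ∑ i ∈ range (t₁ + t₂), h (appendWalk f t₁ g i) (appendWalk f t₁ g (i + 1)) =
      ∑ i ∈ range t₁, h (f i) (f (i + 1)) + ∑ i ∈ range t₂, h (g i) (g (i + 1)) := by
  rw [sum_range_add]
  congr 1
  · refine sum_congr rfl fun i hi => ?_
    have hi : i < t₁ := mem_range.mp hi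
    simp [appendWalk, hi.le, Nat.succ_le_of_lt hi]
  · refine sum_congr rfl fun i _ => ?_
    rw [add_assoc, appendWalk_add hfg, appendWalk_add hfg]

end Walks

section ChordedCycle

variable {n : ℕ}

/- With 0-based indices, `wrapInd` marks the arc `v₁ → vₙ` of `Cₙ` and `chordInd` the chords
`vⱼ → v_{n-4+j}`, each of which shortcuts three arcs of `Cₙ`. -/

def wrapInd (a b : Fin n) : ℕ := if a.val = 0 ∧ b.val = n - 1 then 1 else 0

def chordInd (a b : Fin n) : ℕ := if a.val + n = b.val + 4 then 1 else 0

def numWraps (f : ℕ → Fin n) (t : ℕ) : ℕ := ∑ i ∈ range t, wrapInd (f i) (f (i + 1))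

def numChords (f : ℕ → Fin n) (t : ℕ) : ℕ := ∑ i ∈ range t, chordInd (f i) (f (i + 1))

lemma numWraps_succ (f : ℕ → Fin n) (t : ℕ) :
    numWraps f (t + 1) = numWraps f t + wrapInd (f t) (f (t + 1)) :=
  sum_range_succ _ _

lemma numChords_succ (f : ℕ → Fin n) (t : ℕ) :
    numChords f (t + 1) = numChords f t + chordInd (f t) (f (t + 1)) :=
  sum_range_succ _ _

namespace SignedDigraph

structure IsChordedCycle (S : SignedDigraph (Fin n)) : Prop where
  adj_of_cnAdj : ∀ a b, CnAdj n a b → S.Adj a b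
  cnAdj_or_chord : ∀ a b, S.Adj a b → CnAdj n a b ∨ a.val + n = b.val + 4
  adj_chord_zero : ∀ a b : Fin n, a.val = 0 → b.val = n - 4 → S.Adj a b
  adj_chord_three : ∀ a b : Fin n, a.val = 3 → b.val = n - 1 → S.Adj a b

variable {S : SignedDigraph (Fin n)} {ρ σ : ℤ}

lemma isChordedCycle_of_adj_eq (hn : 4 ≤ n)
    (hadj : S.Adj = B2Adj n ∨ S.Adj = B3Adj n ∨ S.Adj = B4Adj n) : S.IsChordedCycle := by
  rcases hadj with h | h | h <;> constructor <;> intro a b <;>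
    simp only [h, B2Adj, B3Adj, B4Adj, CnAdj] <;> intros <;> omega

lemma isUnit_walkSign {t : ℕ} {f : ℕ → Fin n} (hf : IsWalk S.Adj t f) :
    IsUnit (S.walkSign t f) :=
  IsUnit.prod_iff.mpr fun i hi => Int.isUnit_iff.mpr (S.sgn_unit _ _ (hf i (mem_range.mp hi)))

/-- Because of truncated subtraction this is a walk only while `i ≤ a.val`. -/
def descent (a : Fin n) (i : ℕ) : Fin n := ⟨a.val - i, lt_of_le_of_lt (Nat.sub_le _ _) a.isLt⟩

lemma descent_zero (a : Fin n) : descent a 0 = a := Fin.ext (Nat.sub_zero _)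

lemma descent_descent (a : Fin n) (i j : ℕ) : descent (descent a i) j = descent a (i + j) :=
  Fin.ext (Nat.sub_sub _ _ _)

def potential (S : SignedDigraph (Fin n)) (a : Fin n) : ℤ := S.walkSign a.val (descent a)

lemma potential_eq_walkSign_mul (a : Fin n) {m : ℕ} (hm : m ≤ a.val) :
    S.potential a = S.walkSign m (descent a) * S.potential (descent a m) := by
  have hval : (descent a m).val = a.val - m := rfl
  rw [potential, potential, hval, walkSign, walkSign, walkSign,
    ← Nat.add_sub_cancel' hm, prod_range_add, Nat.add_sub_cancel_left]
  simp only [descent_descent, add_assoc]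

def chordCycle (a b : Fin n) (i : ℕ) : Fin n := if i = 0 then a else descent b (i - 1)

/-- `ρ` and `σ` are the signs of the Hamilton cycle and of the `(n-3)`-cycles of `S`. -/
def SwitchingNormalForm (S : SignedDigraph (Fin n)) (ρ σ : ℤ) : Prop :=
  IsUnit ρ ∧ IsUnit σ ∧ ∃ θ : Fin n → ℤ, (∀ a, IsUnit (θ a)) ∧
    ∀ a b, S.Adj a b → S.sgn a b = θ a * θ b * ρ ^ wrapInd a b * σ ^ chordInd a b

lemma walkSign_eq_of_sgn_eq {θ : Fin n → ℤ} (hθ : ∀ a, IsUnit (θ a))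
    (hsgn : ∀ a b, S.Adj a b → S.sgn a b = θ a * θ b * ρ ^ wrapInd a b * σ ^ chordInd a b)
    {t : ℕ} {f : ℕ → Fin n} (hf : IsWalk S.Adj t f) :
    S.walkSign t f = θ (f 0) * θ (f t) * ρ ^ numWraps f t * σ ^ numChords f t := by
  induction t with
  | zero => simp [walkSign, numWraps, numChords, Int.isUnit_mul_self (hθ _)]
  | succ t ih =>
    rw [walkSign, prod_range_succ, ← walkSign, ih (hf.of_le (by omega)), hsgn _ _ (hf t (by omega)),
      numWraps_succ, numChords_succ, pow_add, pow_add]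
    linear_combination (θ (f 0) * θ (f (t + 1)) * ρ ^ numWraps f t * ρ ^ wrapInd (f t) (f (t + 1))
      * σ ^ numChords f t * σ ^ chordInd (f t) (f (t + 1))) * Int.isUnit_mul_self (hθ (f t))

/-- The switching factors of the common ends cancel. -/
lemma SwitchingNormalForm.walkSign_mul_walkSign (hNF : S.SwitchingNormalForm ρ σ) {t : ℕ}
    {f g : ℕ → Fin n} (hf : IsWalk S.Adj t f) (hg : IsWalk S.Adj t g) (h0 : f 0 = g 0)
    (ht : f t = g t) :
    S.walkSign t f * S.walkSign t g =
      ρ ^ (numWraps f t + numWraps g t) * σ ^ (numChords f t + numChords g t) := by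
  obtain ⟨-, -, θ, hθ, hsgn⟩ := hNF
  rw [walkSign_eq_of_sgn_eq hθ hsgn hf, walkSign_eq_of_sgn_eq hθ hsgn hg, h0, ht, pow_add,
    pow_add]
  linear_combination (ρ ^ numWraps f t * σ ^ numChords f t * ρ ^ numWraps g t *
    σ ^ numChords g t) * (Int.isUnit_mul_self (hθ (g 0)) * θ (g t) * θ (g t) +
      Int.isUnit_mul_self (hθ (g t)))

def HasTypedWalk (S : SignedDigraph (Fin n)) (t : ℕ) (u v : Fin n) (w c : ℕ) : Prop :=
  ∃ f : ℕ → Fin n, f 0 = u ∧ f t = v ∧ IsWalk S.Adj t f ∧ numWraps f t = w ∧ numChords f t = c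

lemma HasTypedWalk.append {t₁ t₂ w₁ w₂ c₁ c₂ : ℕ} {u x v : Fin n}
    (h₁ : S.HasTypedWalk t₁ u x w₁ c₁) (h₂ : S.HasTypedWalk t₂ x v w₂ c₂) :
    S.HasTypedWalk (t₁ + t₂) u v (w₁ + w₂) (c₁ + c₂) := by
  obtain ⟨f, rfl, rfl, hf, rfl, rfl⟩ := h₁
  obtain ⟨g, hg0, rfl, hg, rfl, rfl⟩ := h₂
  exact ⟨appendWalk f t₁ g, by simp [appendWalk], appendWalk_add hg0.symm t₂,
    hf.append hg hg0.symm, sum_appendWalk _ hg0.symm, sum_appendWalk _ hg0.symm⟩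

lemma HasTypedWalk.congr {t t' w w' c c' : ℕ} {u v : Fin n} (h : S.HasTypedWalk t u v w c)
    (ht : t = t') (hw : w = w') (hc : c = c') : S.HasTypedWalk t' u v w' c' :=
  ht ▸ hw ▸ hc ▸ h

lemma hasTypedWalk_arc {a b : Fin n} (hab : S.Adj a b) :
    S.HasTypedWalk 1 a b (wrapInd a b) (chordInd a b) :=
  ⟨fun i => if i = 0 then a else b, rfl, rfl, fun i hi => by simpa [show i = 0 by omega],
    by simp [numWraps], by simp [numChords]⟩

lemma hasTypedWalk_chord {a b : Fin n} (hab : S.Adj a b) (h : a.val + n = b.val + 4) :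
    S.HasTypedWalk 1 a b 0 1 :=
  (hasTypedWalk_arc hab).congr rfl (by rw [wrapInd, if_neg (by omega)]) (by rw [chordInd, if_pos h])

namespace IsChordedCycle

variable (hS : S.IsChordedCycle)
include hS

lemma arc_length (hn : 4 ≤ n) {a b : Fin n} (hab : S.Adj a b) :
    1 + b.val = a.val + n * wrapInd a b + (n - 3) * chordInd a b := by
  have := a.isLt
  rcases hS.cnAdj_or_chord a b hab with (h | h) | h <;>
    simp only [wrapInd, chordInd] <;> split_ifs <;> omega

lemma walk_length (hn : 4 ≤ n) {f : ℕ → Fin n} {t : ℕ} (hf : IsWalk S.Adj t f) :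
    t + (f t).val = (f 0).val + n * numWraps f t + (n - 3) * numChords f t := by
  induction t with
  | zero => simp [numWraps, numChords]
  | succ t ih =>
    have := hS.arc_length hn (hf t (by omega))
    have := ih (hf.of_le (by omega))
    rw [numWraps_succ, numChords_succ, mul_add, mul_add]
    omega

lemma isWalk_descent (a : Fin n) {m : ℕ} (hm : m ≤ a.val) : IsWalk S.Adj m (descent a) :=
  fun i hi => hS.adj_of_cnAdj _ _ (Or.inr (by simp only [descent]; omega))

lemma isUnit_potential (a : Fin n) : IsUnit (S.potential a) :=
  isUnit_walkSign (hS.isWalk_descent a le_rfl)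

lemma walkSign_descent (a : Fin n) {m : ℕ} (hm : m ≤ a.val) :
    S.walkSign m (descent a) = S.potential a * S.potential (descent a m) := by
  rw [potential_eq_walkSign_mul a hm, mul_assoc,
    Int.isUnit_mul_self (hS.isUnit_potential _), mul_one]

lemma isCycle_chordCycle (hn : 4 ≤ n) {a b : Fin n} (hab : S.Adj a b)
    (hchord : a.val + n = b.val + 4) : IsCycle S.Adj (n - 3) (chordCycle a b) := by
  refine ⟨fun i hi => ?_, ?_, fun i hi j hj hij => ?_⟩
  · rcases i with _ | i
    · simpa [chordCycle, descent] using hab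
    · simpa [chordCycle] using hS.isWalk_descent b (m := n - 4) (by omega) i (by omega)
  · simp only [chordCycle, descent, Fin.ext_iff, ↓reduceIte, if_neg (show n - 3 ≠ 0 by omega)]
    omega
  · simp only [chordCycle, descent] at hij
    split_ifs at hij <;> simp only [Fin.ext_iff] at hij <;> omega

lemma walkSign_chordCycle (hn : 4 ≤ n) {a b : Fin n} (hchord : a.val + n = b.val + 4) :
    S.walkSign (n - 3) (chordCycle a b) = S.sgn a b * (S.potential b * S.potential a) := by
  have hchord' : descent b (n - 4) = a := Fin.ext (by simp only [descent]; omega)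
  rw [← hchord', ← hS.walkSign_descent b (by omega), walkSign, walkSign,
    show n - 3 = n - 4 + 1 by omega, prod_range_succ', mul_comm, hchord']
  simp [chordCycle, descent]

theorem exists_switchingNormalForm (hn : 7 ≤ n) (hsgn : S.SameSignCycles (n - 3)) :
    ∃ ρ σ, S.SwitchingNormalForm ρ σ := by
  let z : Fin n := ⟨0, by omega⟩
  let last : Fin n := ⟨n - 1, by omega⟩
  let c : Fin n := ⟨n - 4, by omega⟩
  have hsq : ∀ a, S.potential a * S.potential a = 1 :=
    fun a => Int.isUnit_mul_self (hS.isUnit_potential a)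
  have hz : S.potential z = 1 := by simp [potential, walkSign, z]
  have hzc : z.val + n = c.val + 4 := by simp only [z, c]; omega
  have hchord : ∀ a b, S.Adj a b → a.val + n = b.val + 4 →
      S.sgn a b * (S.potential b * S.potential a) = S.sgn z c * S.potential c := by
    intro a b hab h
    have hcyc := hS.isCycle_chordCycle (by omega) (hS.adj_chord_zero z c rfl rfl) hzc
    rw [← hS.walkSign_chordCycle (by omega) h, hsgn _ _ (hS.isCycle_chordCycle (by omega) hab h)
      hcyc, hS.walkSign_chordCycle (by omega) hzc, hz, mul_one]
  have hunit : ∀ a b, S.Adj a b → IsUnit (S.sgn a b * S.potential b) :=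
    fun a b hab => (Int.isUnit_iff.mpr (S.sgn_unit a b hab)).mul (hS.isUnit_potential b)
  refine ⟨S.sgn z last * S.potential last, S.sgn z c * S.potential c,
    hunit _ _ (hS.adj_of_cnAdj z last (Or.inl ⟨rfl, rfl⟩)),
    hunit _ _ (hS.adj_chord_zero z c rfl rfl), S.potential, hS.isUnit_potential, fun a b hab => ?_⟩
  rcases hS.cnAdj_or_chord a b hab with (⟨ha, hb⟩ | h) | h
  · obtain rfl : a = z := Fin.ext ha
    obtain rfl : b = last := Fin.ext hb
    simp only [wrapInd, chordInd, z, last, hz]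
    simp only [true_and, if_true, if_neg (show ¬ 0 + n = n - 1 + 4 by omega)]
    linear_combination (-S.sgn z last) * hsq last
  · have hb : descent a 1 = b := Fin.ext (by simp only [descent]; omega)
    have hstep := hS.walkSign_descent a (m := 1) (by omega)
    rw [walkSign, prod_range_one, zero_add, descent_zero, hb] at hstep
    rw [wrapInd, chordInd, if_neg (by omega), if_neg (by omega), pow_zero, pow_zero, mul_one,
      mul_one, hstep]
  · rw [wrapInd, chordInd, if_neg (by omega), if_pos h, pow_zero, pow_one, mul_one]
    linear_combination (S.potential a * S.potential b) * hchord a b hab h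
      + (-S.sgn a b) * hsq a + (-S.sgn a b * S.potential a * S.potential a) * hsq b

lemma hasTypedWalk_descent (hn : 4 ≤ n) {a b : Fin n} {m : ℕ} (h : a.val = b.val + m) :
    S.HasTypedWalk m a b 0 0 := by
  have hstep : ∀ i < m, a.val - i ≠ 0 ∧ a.val - i + n ≠ a.val - (i + 1) + 4 := fun i hi =>
    ⟨by omega, by omega⟩
  refine ⟨descent a, descent_zero a, Fin.ext (by simp only [descent]; omega),
    hS.isWalk_descent a (by omega), sum_eq_zero fun i hi => ?_, sum_eq_zero fun i hi => ?_⟩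
  · simp [wrapInd, descent, hstep i (mem_range.mp hi)]
  · simp [chordInd, descent, hstep i (mem_range.mp hi)]

section FromZero

variable (hn : 7 ≤ n) {z : Fin n} (hz : z.val = 0)
include hn hz

lemma hasTypedWalk_wrap {v : Fin n} : S.HasTypedWalk (n - v.val) z v 1 0 := by
  let last : Fin n := ⟨n - 1, by omega⟩
  have harc := hasTypedWalk_arc (hS.adj_of_cnAdj z last (Or.inl ⟨hz, rfl⟩))
  rw [wrapInd, chordInd, if_pos ⟨hz, rfl⟩, if_neg (by simp only [last]; omega)] at harc
  exact (harc.append (hS.hasTypedWalk_descent (by omega) (b := v) (m := n - 1 - v.val)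
    (by simp only [last]; omega))).congr (by omega) rfl rfl

lemma hasTypedWalk_two_chords {v : Fin n} : S.HasTypedWalk (2 * (n - 3) - v.val) z v 0 2 := by
  let three : Fin n := ⟨3, by omega⟩
  let last : Fin n := ⟨n - 1, by omega⟩
  let c : Fin n := ⟨n - 4, by omega⟩
  have h₁ := hasTypedWalk_chord (hS.adj_chord_zero z c hz rfl) (by simp only [c]; omega)
  have h₂ := hS.hasTypedWalk_descent (by omega) (a := c) (b := three) (m := n - 7)
    (by simp only [c, three]; omega)
  have h₃ := hasTypedWalk_chord (hS.adj_chord_three three last rfl rfl)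
    (by simp only [three, last]; omega)
  have h₄ := hS.hasTypedWalk_descent (by omega) (a := last) (b := v) (m := n - 1 - v.val)
    (by simp only [last]; omega)
  exact (((h₁.append h₂).append h₃).append h₄).congr (by omega) rfl rfl

lemma hasTypedWalk_chord_loop : S.HasTypedWalk (n - 3) z z 0 1 := by
  let c : Fin n := ⟨n - 4, by omega⟩
  have h₁ := hasTypedWalk_chord (hS.adj_chord_zero z c hz rfl) (by simp only [c]; omega)
  have h₂ := hS.hasTypedWalk_descent (by omega) (a := c) (b := z) (m := n - 4)
    (by simp only [c]; omega)
  exact (h₁.append h₂).congr (by omega) rfl rfl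

lemma hasTypedWalk_loops (w c : ℕ) : S.HasTypedWalk (n * w + (n - 3) * c) z z w c := by
  induction w with
  | zero =>
    induction c with
    | zero => exact ⟨fun _ => z, rfl, rfl, fun _ _ => by omega, rfl, rfl⟩
    | succ c ih => exact (ih.append (hS.hasTypedWalk_chord_loop hn hz)).congr (by ring) rfl rfl
  | succ w ih =>
    have hloop := hS.hasTypedWalk_wrap hn hz (v := z)
    rw [hz, Nat.sub_zero] at hloop
    exact (ih.append hloop).congr (by ring) rfl (by ring)

end FromZero

variable (hn : 7 ≤ n)
include hn

/-- Descend to `v₁`, wind `w` Hamilton cycles and `c` chord cycles there, and leave `v₁`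
through the arc `v₁ → vₙ` or through the chords at `v₁` and `v₄`. -/
lemma hasTypedWalk {t w c : ℕ} {u v : Fin n} (hwc : 1 ≤ w ∨ 2 ≤ c)
    (ht : t + v.val = u.val + n * w + (n - 3) * c) : S.HasTypedWalk t u v w c := by
  let z : Fin n := ⟨0, by omega⟩
  have hz : z.val = 0 := rfl
  have hu := hS.hasTypedWalk_descent (by omega) (a := u) (b := z) (m := u.val) (by omega)
  have hv := v.isLt
  rcases hwc with hw | hc
  · obtain ⟨w, rfl⟩ := Nat.exists_eq_add_of_le' hw
    exact ((hu.append (hS.hasTypedWalk_loops hn hz w c)).append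
      (hS.hasTypedWalk_wrap hn hz)).congr (by rw [mul_add] at ht; omega) (by ring) (by ring)
  · obtain ⟨c, rfl⟩ := Nat.exists_eq_add_of_le' hc
    exact ((hu.append (hS.hasTypedWalk_loops hn hz w c)).append
      (hS.hasTypedWalk_two_chords hn hz)).congr (by rw [mul_add] at ht; omega) (by ring) (by ring)

lemma hasSSSD (hNF : S.SwitchingNormalForm ρ σ) (hε : ρ ^ (n - 3) * σ ^ n = -1)
    {t p q : ℕ} {u v : Fin n} (h : t + v.val = u.val + n * p + (n - 3) * q + n * (n - 3)) :
    S.HasSSSD t u v := by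
  obtain ⟨f, hf0, hft, hf, hfw, hfc⟩ := hS.hasTypedWalk hn (t := t) (u := u) (v := v)
    (w := p + (n - 3)) (c := q) (Or.inl (by omega)) (by rw [mul_add]; omega)
  obtain ⟨g, hg0, hgt, hg, hgw, hgc⟩ := hS.hasTypedWalk hn (t := t) (u := u) (v := v)
    (w := p) (c := q + n) (Or.inr (by omega)) (by rw [mul_add, mul_comm (n - 3) n]; omega)
  refine ⟨f, g, ⟨hf0, hft, hf⟩, ⟨hg0, hgt, hg⟩, fun heq => ?_⟩
  have hprod := hNF.walkSign_mul_walkSign hf hg (hf0.trans hg0.symm) (hft.trans hgt.symm)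
  rw [heq, Int.isUnit_mul_self (isUnit_walkSign hg), hfw, hfc, hgw, hgc,
    show p + (n - 3) + p = 2 * p + (n - 3) by ring, show q + (q + n) = 2 * q + n by ring,
    Int.pow_two_mul_add_of_isUnit hNF.1, Int.pow_two_mul_add_of_isUnit hNF.2.1, hε] at hprod
  exact absurd hprod (by decide)

lemma not_hasSSSD (hNF : S.SwitchingNormalForm ρ σ) (hcop : n.Coprime (n - 3)) {t : ℕ}
    {u v : Fin n} (h : ∀ p q, u.val + n * p + (n - 3) * q + n * (n - 3) ≠ t + v.val) :
    ¬ S.HasSSSD t u v := by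
  rintro ⟨f, g, ⟨hf0, hft, hf⟩, ⟨hg0, hgt, hg⟩, hne⟩
  have hlf := hS.walk_length (by omega) hf
  have hlg := hS.walk_length (by omega) hg
  rw [hf0, hft] at hlf
  rw [hg0, hgt] at hlg
  obtain ⟨hw, hc⟩ := hcop.eq_of_mul_add_mul_eq (x := numWraps f t) (y := numChords f t)
    (x' := numWraps g t) (y' := numChords g t) (by omega) (by omega)
    fun p q hpq => h p q (by omega)
  refine hne (Int.eq_of_mul_eq_one ?_)
  rw [hNF.walkSign_mul_walkSign hf hg (hf0.trans hg0.symm) (hft.trans hgt.symm), hw, hc,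
    ← two_mul, ← two_mul, pow_mul, pow_mul, Int.isUnit_sq hNF.1, Int.isUnit_sq hNF.2.1, one_pow,
    one_pow, one_mul]

lemma eq_neg_one_of_isPrimitiveNonpowerful (hNF : S.SwitchingNormalForm ρ σ)
    (hcop : n.Coprime (n - 3)) (hpn : S.IsPrimitiveNonpowerful) : ρ ^ (n - 3) * σ ^ n = -1 := by
  have hρ := hNF.1
  have hσ := hNF.2.1
  have key : ∀ w c w' c' : ℕ, n * w + (n - 3) * c = n * w' + (n - 3) * c' → c ≤ c' →
      ρ ^ (w + w') * σ ^ (c + c') = -1 → ρ ^ (n - 3) * σ ^ n = -1 := by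
    intro w c w' c' h hc hsgn
    obtain ⟨k, rfl, rfl⟩ := hcop.exists_eq_add_mul_of_mul_add_mul_eq (by omega) h hc
    rw [show w' + (n - 3) * k + w' = 2 * w' + (n - 3) * k by ring,
      show c + (c + n * k) = 2 * c + n * k by ring, Int.pow_two_mul_add_of_isUnit hρ,
      Int.pow_two_mul_add_of_isUnit hσ, pow_mul, pow_mul, ← mul_pow] at hsgn
    rcases Int.isUnit_eq_one_or ((hρ.pow _).mul (hσ.pow _)) with h1 | h1
    · rw [h1, one_pow] at hsgn
      exact absurd hsgn (by decide)
    · exact h1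
  obtain ⟨l, -, hl⟩ := hpn
  let z : Fin n := ⟨0, by omega⟩
  have hz : z.val = 0 := rfl
  obtain ⟨f, g, ⟨hf0, hft, hf⟩, ⟨hg0, hgt, hg⟩, hne⟩ := hl l le_rfl z z
  have hlf := hS.walk_length (by omega) hf
  have hlg := hS.walk_length (by omega) hg
  rw [hf0, hft, hz] at hlf
  rw [hg0, hgt, hz] at hlg
  have hneg : S.walkSign l f * S.walkSign l g = -1 := by
    rw [(Int.isUnit_ne_iff_eq_neg (isUnit_walkSign hf) (isUnit_walkSign hg)).mp hne, neg_mul,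
      Int.isUnit_mul_self (isUnit_walkSign hg)]
  rw [hNF.walkSign_mul_walkSign hf hg (hf0.trans hg0.symm) (hft.trans hgt.symm)] at hneg
  rcases le_total (numChords f l) (numChords g l) with hc | hc
  · exact key _ _ _ _ (by omega) hc hneg
  · exact key (numWraps g l) (numChords g l) (numWraps f l) (numChords f l) (by omega) hc
      (by rwa [add_comm (numWraps g l), add_comm (numChords g l)])

/-- `2n² - 8n + 3` is `n (n-3)` plus the Frobenius number of `n` and `n-3`. -/
theorem localBase_eq (hNF : S.SwitchingNormalForm ρ σ) (hε : ρ ^ (n - 3) * σ ^ n = -1)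
    (hcop : n.Coprime (n - 3)) (u : Fin n) :
    S.localBase u = 2 * n ^ 2 - 8 * n + 4 + u.val := by
  obtain ⟨hF, hF'⟩ := frobeniusNumber_iff.mp (frobeniusNumber_pair hcop (by omega) (by omega))
  simp only [AddSubmonoid.mem_closure_pair, smul_eq_mul] at hF hF'
  have hbase : 2 * n ^ 2 - 8 * n + 4 + u.val =
      u.val + n * (n - 3) + (n * (n - 3) - n - (n - 3)) + 1 := by
    obtain ⟨m, rfl⟩ : ∃ m, n = m + 7 := ⟨n - 7, by omega⟩
    simp only [show m + 7 - 3 = m + 4 by omega]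
    ring_nf
    omega
  rw [hbase, localBase, Nat.sInf_upward_closed_eq_succ_iff]
  swap
  · exact fun _ _ h₁ h₂ t ht => h₂ t (h₁.trans ht)
  constructor
  · intro t ht v
    obtain ⟨p, q, hpq⟩ := hF' (t + v.val - u.val - n * (n - 3)) (by omega)
    exact hS.hasSSSD hn hNF hε (p := p) (q := q) (by rw [mul_comm n p, mul_comm (n - 3) q]; omega)
  · intro hall
    exact hS.not_hasSSSD hn hNF hcop (v := ⟨0, by omega⟩)
      (fun p q hpq => hF ⟨p, q, by simp only at hpq; rw [mul_comm p, mul_comm q]; omega⟩)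
      (hall _ le_rfl _)

end IsChordedCycle

end SignedDigraph

end ChordedCycle

/-- Let `n ≥ 6` with `gcd(n, n-3) = 1`. For `j = 2, 3, 4`, let
`𝒬ⱼ` be a primitive nonpowerful signed digraph with underlying digraph `𝓑ⱼ` in
which all cycles of length `n-3` have the same sign. Then
`l(k) = l(v_k) = 2n²-8n+3+k` for every `1 ≤ k ≤ n` (and every such `j`). -/
theorem stmt10 (n : ℕ) (hn : 6 ≤ n) (hgcd : Nat.gcd n (n - 3) = 1)
    (S : SignedDigraph (Fin n))
    (hadj : S.Adj = B2Adj n ∨ S.Adj = B3Adj n ∨ S.Adj = B4Adj n)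
    (hpn : S.IsPrimitiveNonpowerful)
    (hsgn : S.SameSignCycles (n - 3)) :
    ∀ k : ℕ, ∀ _hk1 : 1 ≤ k, ∀ _hk2 : k ≤ n,
      kthSmallest S.localBase k = S.localBase ⟨k - 1, by omega⟩ ∧
      S.localBase ⟨k - 1, by omega⟩ = 2 * n ^ 2 - 8 * n + 3 + k := by
  intro k hk1 hk2
  have hn7 : 7 ≤ n := by
    by_contra h
    obtain rfl : n = 6 := by omega
    exact absurd hgcd (by decide)
  have hS := SignedDigraph.isChordedCycle_of_adj_eq (by omega) hadj
  obtain ⟨ρ, σ, hNF⟩ := hS.exists_switchingNormalForm hn7 hsgn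
  have hε := hS.eq_neg_one_of_isPrimitiveNonpowerful hn7 hNF hgcd hpn
  have hbase := hS.localBase_eq hn7 hNF hε hgcd
  have hmono : Monotone S.localBase := fun a b hab => by
    rw [hbase, hbase]
    exact Nat.add_le_add_left hab _
  have hkth := kthSmallest_of_monotone hmono ⟨k - 1, by omega⟩
  simp only [Nat.sub_add_cancel hk1] at hkth
  refine ⟨hkth, ?_⟩
  rw [hbase, Fin.val_mk]
  omega
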